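/- arXiv:1210.7363 — 2 statements merged into one kernel-verified Lean document; each statement's English description precedes it below -/
import Mathlib

section
/- Let α ≤ 1/2 and let v : ℝ → ℝ be a C² convex solution of the one-dimensional translator equation (1 + v'²)^{1/(2α) - 1/2} · v''/(1 + v'²) = 1, i.e. v'' = (1 + v'²)^{3/2 - 1/(2α)}, defined on all of ℝ. Then u(x, y) := v(x) - y, as a function on ℝ², satisfies (|Du|²)^{1/(2α)-1/2} Σ_{i,j}(δ_{ij} - u_iu_j/|Du|²) u_{ij} = 1 and is convex but not rotationally symmetric (its level sets are translates of the graph of v, not circles). -/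
/-!
The function `u(x, y) = v x - y` has gradient `(v' x, -1)` and Hessian `v'' x · e₀ ⊗ e₀`, so
`L₀ u = (1 + v'²)^(1/(2α) - 1/2) · v'' · (1 - v'²/(1 + v'²)) = (1 + v'²)^(1/(2α) - 3/2) · v''`,
which the ODE makes equal to `1`. It is convex as a convex function of `x` minus a linear
function, and it is not constant on circles about any centre `c` because it takes different
values at `c ± e₁`.
-/

open Real

/-- The operator `L_σ(v) = (σ + |Dv|²)^{1/(2α)-1/2} Σ (δ_{ij} - v_i v_j/(σ+|Dv|²)) v_{ij}`
in dimension n. -/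
noncomputable def Lsigma (n : ℕ) (σ α : ℝ) (v : EuclideanSpace ℝ (Fin n) → ℝ)
    (x : EuclideanSpace ℝ (Fin n)) : ℝ :=
  (σ + ‖gradient v x‖^2) ^ (1/(2*α) - 1/2) *
    ∑ i : Fin n, ∑ j : Fin n,
      ((if i = j then (1:ℝ) else 0) - gradient v x i * gradient v x j / (σ + ‖gradient v x‖^2)) *
        iteratedFDeriv ℝ 2 v x ![EuclideanSpace.single i 1, EuclideanSpace.single j 1]

theorem gradient_apply_eq_fderiv_single {ι : Type*} [Fintype ι] [DecidableEq ι]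
    (f : EuclideanSpace ℝ ι → ℝ) (x : EuclideanSpace ℝ ι) (i : ι) :
    gradient f x i = fderiv ℝ f x (EuclideanSpace.single i 1) := by
  rw [← InnerProductSpace.toDual_symm_apply, real_inner_comm, EuclideanSpace.inner_single_left]
  simp [gradient]

theorem not_exists_center_of_injective_along {E : Type*} [NormedAddCommGroup E] [NormedSpace ℝ E]
    {u : E → ℝ} (e : E) (hu : ∀ c, Function.Injective fun t : ℝ => u (c + t • e)) :
    ¬ ∃ c, ∀ p q : E, ‖p - c‖ = ‖q - c‖ → u p = u q := by
  rintro ⟨c, hc⟩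
  have h := hc (c + (1 : ℝ) • e) (c + (-1 : ℝ) • e) (by simp)
  exact absurd (hu c h) (by norm_num)

noncomputable def graphDefiningFunction (v : ℝ → ℝ) (p : EuclideanSpace ℝ (Fin 2)) : ℝ :=
  v (p 0) - p 1

namespace graphDefiningFunction

variable {v : ℝ → ℝ}

local notation "π₀" => (EuclideanSpace.proj (0 : Fin 2) : EuclideanSpace ℝ (Fin 2) →L[ℝ] ℝ)
local notation "π₁" => (EuclideanSpace.proj (1 : Fin 2) : EuclideanSpace ℝ (Fin 2) →L[ℝ] ℝ)

theorem convexOn (hv : ConvexOn ℝ Set.univ v) :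
    ConvexOn ℝ Set.univ (graphDefiningFunction v) :=
  (hv.comp_linearMap (π₀).toLinearMap).sub ((π₁).toLinearMap.concaveOn convex_univ)

theorem injective_along (c : EuclideanSpace ℝ (Fin 2)) :
    Function.Injective fun t : ℝ =>
      graphDefiningFunction v (c + t • EuclideanSpace.single 1 1) := by
  intro s t h
  simpa [graphDefiningFunction] using h

theorem hasFDerivAt (hv : Differentiable ℝ v) (x : EuclideanSpace ℝ (Fin 2)) :
    HasFDerivAt (graphDefiningFunction v) (deriv v (x 0) • π₀ - π₁) x :=
  ((hv (x 0)).hasDerivAt.comp_hasFDerivAt x (π₀).hasFDerivAt).sub (π₁).hasFDerivAt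

theorem gradient_apply_zero (hv : Differentiable ℝ v) (x : EuclideanSpace ℝ (Fin 2)) :
    gradient (graphDefiningFunction v) x 0 = deriv v (x 0) := by
  simp [gradient_apply_eq_fderiv_single, (hasFDerivAt hv x).fderiv]

theorem gradient_apply_one (hv : Differentiable ℝ v) (x : EuclideanSpace ℝ (Fin 2)) :
    gradient (graphDefiningFunction v) x 1 = -1 := by
  simp [gradient_apply_eq_fderiv_single, (hasFDerivAt hv x).fderiv]

theorem norm_gradient_sq (hv : Differentiable ℝ v) (x : EuclideanSpace ℝ (Fin 2)) :
    ‖gradient (graphDefiningFunction v) x‖ ^ 2 = 1 + deriv v (x 0) ^ 2 := by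
  rw [EuclideanSpace.norm_sq_eq, Fin.sum_univ_two, gradient_apply_zero hv, gradient_apply_one hv]
  norm_num
  ring

theorem iteratedFDeriv_two_apply_single (hv : ContDiff ℝ 2 v) (x : EuclideanSpace ℝ (Fin 2))
    (i j : Fin 2) :
    iteratedFDeriv ℝ 2 (graphDefiningFunction v) x
        ![EuclideanSpace.single i 1, EuclideanSpace.single j 1] =
      if i = 0 ∧ j = 0 then deriv (deriv v) (x 0) else 0 := by
  have hv₁ : Differentiable ℝ v := hv.differentiable (by norm_num)
  have hv₂ : Differentiable ℝ (deriv v) :=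
    (contDiff_succ_iff_deriv (n := 1).mp (by exact_mod_cast hv)).2.2.differentiable (by norm_num)
  have hfderiv : HasFDerivAt (fderiv ℝ (graphDefiningFunction v))
      ((deriv (deriv v) (x 0) • π₀).smulRight π₀) x := by
    have hcoeff := (hv₂ (x 0)).hasDerivAt.comp_hasFDerivAt x (π₀).hasFDerivAt
    refine ((hcoeff.smul_const π₀).sub_const π₁).congr_of_eventuallyEq ?_
    filter_upwards with y using (hasFDerivAt hv₁ y).fderiv
  rw [iteratedFDeriv_two_apply, hfderiv.fderiv]
  fin_cases i <;> fin_cases j <;> simp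

theorem Lsigma_eq (hv : ContDiff ℝ 2 v) (σ α : ℝ) (z : EuclideanSpace ℝ (Fin 2)) :
    Lsigma 2 σ α (graphDefiningFunction v) z =
      (σ + (1 + deriv v (z 0) ^ 2)) ^ (1 / (2 * α) - 1 / 2) *
        (deriv (deriv v) (z 0) * (1 - deriv v (z 0) ^ 2 / (σ + (1 + deriv v (z 0) ^ 2)))) := by
  have hv₁ : Differentiable ℝ v := hv.differentiable (by norm_num)
  simp only [Lsigma, Fin.sum_univ_two, iteratedFDeriv_two_apply_single hv, norm_gradient_sq hv₁,
    gradient_apply_zero hv₁, gradient_apply_one hv₁, ↓reduceIte, Fin.isValue, zero_ne_one,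
    one_ne_zero, and_true, and_false]
  ring

end graphDefiningFunction

theorem stmt_18_general (α : ℝ)
    (v : ℝ → ℝ) (hv : ContDiff ℝ 2 v) (hconv : ConvexOn ℝ Set.univ v)
    (hODE : ∀ x : ℝ, deriv (deriv v) x = (1 + (deriv v x)^2) ^ ((3:ℝ)/2 - 1/(2*α)))
    (u : EuclideanSpace ℝ (Fin 2) → ℝ)
    (hu : ∀ p : EuclideanSpace ℝ (Fin 2), u p = v (p 0) - p 1) :
    (∀ z : EuclideanSpace ℝ (Fin 2), Lsigma 2 0 α u z = 1) ∧
    ConvexOn ℝ Set.univ u ∧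
    ¬ ∃ c : EuclideanSpace ℝ (Fin 2), ∀ p q : EuclideanSpace ℝ (Fin 2),
        ‖p - c‖ = ‖q - c‖ → u p = u q := by
  obtain rfl : u = graphDefiningFunction v := funext hu
  refine ⟨fun z => ?_, graphDefiningFunction.convexOn hconv,
    not_exists_center_of_injective_along _ graphDefiningFunction.injective_along⟩
  set w := 1 + deriv v (z 0) ^ 2
  have hw : 0 < w := by positivity
  calc Lsigma 2 0 α (graphDefiningFunction v) z
      = w ^ (1 / (2 * α) - 1 / 2) * w ^ ((3:ℝ)/2 - 1/(2*α)) * w⁻¹ := by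
        rw [graphDefiningFunction.Lsigma_eq hv, hODE, zero_add]
        field_simp
        ring
    _ = 1 := by
        rw [← rpow_add hw, show 1 / (2 * α) - 1 / 2 + (3 / 2 - 1 / (2 * α)) = (1 : ℝ) by ring,
          rpow_one, mul_inv_cancel₀ hw.ne']

/-- For α ≤ 1/2, from an entire one-dimensional translator v one builds
u(x,y) = v(x) - y, an entire convex non-rotationally-symmetric solution of L₀ u = 1. -/
theorem stmt_18 (α : ℝ) (hα₀ : 0 < α) (hα : α ≤ 1/2)
    (v : ℝ → ℝ) (hv : ContDiff ℝ 2 v) (hconv : ConvexOn ℝ Set.univ v)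
    (hODE : ∀ x : ℝ, deriv (deriv v) x = (1 + (deriv v x)^2) ^ ((3:ℝ)/2 - 1/(2*α)))
    (u : EuclideanSpace ℝ (Fin 2) → ℝ)
    (hu : ∀ p : EuclideanSpace ℝ (Fin 2), u p = v (p 0) - p 1) :
    (∀ z : EuclideanSpace ℝ (Fin 2), Lsigma 2 0 α u z = 1) ∧
    ConvexOn ℝ Set.univ u ∧
    ¬ ∃ c : EuclideanSpace ℝ (Fin 2), ∀ p q : EuclideanSpace ℝ (Fin 2),
        ‖p - c‖ = ‖q - c‖ → u p = u q :=
  stmt_18_general α v hv hconv hODE u hu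
end

section
/- Let α > 0, and for the ODE v'' = (1 + v'²)^{3/2 - 1/(2α)} with v(0) = v'(0) = 0: the maximal interval of existence of v is all of ℝ if and only if ∫₀^∞ (1 + w²)^{1/(2α) - 3/2} dw = ∞, which holds if and only if α ≤ 1/2. -/
/-!
Put `f t = (1 + t²)^p` with `p = 1/(2α) - 3/2` and `F u = ∫₀ᵘ f`. The equation for `w = v'` reads
`w' = 1 / f(w)`, so separation of variables gives `F (w x) = x`: a global solution with `w 0 = 0`
exists iff the strictly increasing odd function `F` is onto `ℝ`, i.e. iff `f` is not integrable
on `(0, ∞)`, and then `w = F⁻¹`. Since `f t ≍ t^(2p)` at infinity, this happens iff `2p ≥ -1`,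
i.e. iff `α ≤ 1/2`.
-/

open Real MeasureTheory Set Filter Asymptotics Function

lemma isTheta_one_add_sq_rpow_atTop (p : ℝ) :
    (fun t : ℝ => (1 + t ^ 2) ^ p) =Θ[atTop] fun t => t ^ (2 * p) := by
  have hsq : (fun t : ℝ => 1 + t ^ 2) =Θ[atTop] fun t => t ^ 2 :=
    ((isLittleO_one_left_iff ℝ).2 <| tendsto_norm_atTop_atTop.comp <|
      tendsto_pow_atTop two_ne_zero).add_isTheta (isTheta_refl _ _)
  refine (hsq.rpow (.of_forall fun t => by positivity)
    (.of_forall fun t => by positivity)).trans_eventuallyEq ?_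
  filter_upwards [eventually_ge_atTop 0] with t ht
  rw [← rpow_natCast, ← rpow_mul ht]
  norm_num

lemma continuous_one_add_sq_rpow (p : ℝ) : Continuous fun t : ℝ => (1 + t ^ 2) ^ p :=
  (by fun_prop : Continuous fun t : ℝ => 1 + t ^ 2).rpow_const fun t => .inl (by positivity)

lemma integrableOn_Ioi_one_add_sq_rpow_iff {p : ℝ} :
    IntegrableOn (fun t : ℝ => (1 + t ^ 2) ^ p) (Ioi 0) ↔ p < -1 / 2 := by
  have hcont := continuous_one_add_sq_rpow p
  have hΘ := isTheta_one_add_sq_rpow_atTop p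
  have hmeas : StronglyMeasurableAtFilter (fun t : ℝ => t ^ (2 * p)) atTop :=
    (measurable_id.pow_const _).aestronglyMeasurable.stronglyMeasurableAtFilter
  have hrpow : IntegrableAtFilter (fun t : ℝ => t ^ (2 * p)) atTop ↔ p < -1 / 2 :=
    integrableAtFilter_rpow_atTop_iff.trans (by constructor <;> intro <;> linarith)
  rw [← integrableOn_Ici_iff_integrableOn_Ioi, integrableOn_Ici_iff_integrableAtFilter_atTop,
    and_iff_left (hcont.continuousOn.locallyIntegrableOn measurableSet_Ici), ← hrpow]
  exact ⟨fun h => hΘ.2.integrableAtFilter hmeas h,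
    fun h => hΘ.1.integrableAtFilter (hcont.stronglyMeasurableAtFilter _ _) h⟩

section Primitive

variable {f : ℝ → ℝ}

lemma intervalIntegral_le_integral_Ioi (hint : IntegrableOn f (Ioi 0)) (hnn : ∀ t, 0 ≤ f t)
    (u : ℝ) : ∫ t in (0 : ℝ)..u, f t ≤ ∫ t in Ioi 0, f t :=
  -- `∫ t in 0..u, f t` unfolds to `∫ t in Ioc 0 u, f t - ∫ t in Ioc u 0, f t`
  calc ∫ t in (0 : ℝ)..u, f t ≤ ∫ t in Ioc 0 u, f t :=
        sub_le_self _ (setIntegral_nonneg measurableSet_Ioc fun t _ => hnn t)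
    _ ≤ ∫ t in Ioi 0, f t :=
        setIntegral_mono_set hint (.of_forall hnn) Ioc_subset_Ioi_self.eventuallyLE

lemma integrableOn_Ioi_iff_bddAbove_intervalIntegral (hf : Continuous f) (hnn : ∀ t, 0 ≤ f t) :
    IntegrableOn f (Ioi 0) ↔ BddAbove (range fun u => ∫ t in (0 : ℝ)..u, f t) := by
  refine ⟨fun hint => ⟨_, forall_mem_range.2 (intervalIntegral_le_integral_Ioi hint hnn)⟩,
    fun ⟨M, hM⟩ => ?_⟩
  refine integrableOn_Ioi_of_intervalIntegral_norm_bounded M 0 (fun _ => hf.integrableOn_Ioc)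
    tendsto_id (.of_forall fun u => ?_)
  simpa only [id, norm_of_nonneg (hnn _)] using hM (mem_range_self u)

lemma strictMono_intervalIntegral (hf : Continuous f) (hpos : ∀ t, 0 < f t) :
    StrictMono fun u => ∫ t in (0 : ℝ)..u, f t :=
  strictMono_of_hasDerivAt_pos (fun u => (hf.integral_hasStrictDerivAt 0 u).hasDerivAt) hpos

lemma intervalIntegral_zero_neg_of_even (heven : ∀ t, f (-t) = f t) (u : ℝ) :
    ∫ t in (0 : ℝ)..-u, f t = -∫ t in (0 : ℝ)..u, f t := by
  have h := intervalIntegral.integral_comp_neg (a := 0) (b := u) f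
  simp only [heven, neg_zero] at h
  rw [h, intervalIntegral.integral_symm]

lemma surjective_intervalIntegral (hf : Continuous f) (hpos : ∀ t, 0 < f t)
    (heven : ∀ t, f (-t) = f t) (h : ¬IntegrableOn f (Ioi 0)) :
    Surjective fun u => ∫ t in (0 : ℝ)..u, f t := by
  set F := fun u => ∫ t in (0 : ℝ)..u, f t
  have htop : Tendsto F atTop atTop :=
    tendsto_atTop_atTop_of_monotone' (strictMono_intervalIntegral hf hpos).monotone
      ((integrableOn_Ioi_iff_bddAbove_intervalIntegral hf fun t => (hpos t).le).not.1 h)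
  have hodd : F = fun u => -F (-u) := funext fun u => by
    simp only [F, intervalIntegral_zero_neg_of_even heven, neg_neg]
  have hbot : Tendsto F atBot atBot := by
    rw [hodd]
    exact tendsto_neg_atTop_atBot.comp (htop.comp tendsto_neg_atBot_atTop)
  exact (intervalIntegral.continuous_primitive (fun _ _ => hf.intervalIntegrable _ _) 0).surjective
    htop hbot

lemma intervalIntegral_comp_eq_of_hasDerivAt_inv_comp (hf : Continuous f)
    (hne : ∀ t, f t ≠ 0) {w : ℝ → ℝ} (hw0 : w 0 = 0)
    (hw : ∀ x, HasDerivAt w (f (w x))⁻¹ x) (x : ℝ) : ∫ t in (0 : ℝ)..w x, f t = x := by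
  have hderiv : ∀ y, HasDerivAt (fun y => ∫ t in (0 : ℝ)..w y, f t) 1 y := fun y => by
    simpa only [comp_def, mul_inv_cancel₀ (hne _)] using
      (hf.integral_hasStrictDerivAt 0 (w y)).hasDerivAt.comp y (hw y)
  have hftc := intervalIntegral.integral_eq_sub_of_hasDerivAt (a := 0) (b := x)
    (fun y _ => hderiv y) intervalIntegrable_const
  simpa [hw0] using hftc.symm

lemma not_integrableOn_Ioi_of_hasDerivAt_inv_comp (hf : Continuous f) (hpos : ∀ t, 0 < f t)
    {w : ℝ → ℝ} (hw0 : w 0 = 0) (hw : ∀ x, HasDerivAt w (f (w x))⁻¹ x) :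
    ¬IntegrableOn f (Ioi 0) := by
  rw [integrableOn_Ioi_iff_bddAbove_intervalIntegral hf fun t => (hpos t).le]
  rintro ⟨M, hM⟩
  have := hM ⟨w (M + 1),
    intervalIntegral_comp_eq_of_hasDerivAt_inv_comp hf (fun t => (hpos t).ne') hw0 hw (M + 1)⟩
  linarith

lemma exists_hasDerivAt_inv_comp_of_not_integrableOn_Ioi (hf : Continuous f)
    (hpos : ∀ t, 0 < f t) (heven : ∀ t, f (-t) = f t) (h : ¬IntegrableOn f (Ioi 0)) :
    ∃ w : ℝ → ℝ, w 0 = 0 ∧ ∀ x, HasDerivAt w (f (w x))⁻¹ x := by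
  let e := (strictMono_intervalIntegral hf hpos).orderIsoOfSurjective _
    (surjective_intervalIntegral hf hpos heven h)
  refine ⟨e.symm, e.symm_apply_eq.2 (by simp [e]), fun x => ?_⟩
  exact HasDerivAt.of_local_left_inverse e.symm.continuous.continuousAt
    (hf.integral_hasStrictDerivAt 0 _).hasDerivAt (hpos _).ne' (.of_forall e.apply_symm_apply)

theorem exists_hasDerivAt_inv_comp_iff (hf : Continuous f) (hpos : ∀ t, 0 < f t)
    (heven : ∀ t, f (-t) = f t) :
    (∃ w : ℝ → ℝ, w 0 = 0 ∧ ∀ x, HasDerivAt w (f (w x))⁻¹ x) ↔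
      ¬IntegrableOn f (Ioi 0) :=
  ⟨fun ⟨_, hw0, hw⟩ => not_integrableOn_Ioi_of_hasDerivAt_inv_comp hf hpos hw0 hw,
    exists_hasDerivAt_inv_comp_of_not_integrableOn_Ioi hf hpos heven⟩

end Primitive

/-- The ODE v'' = (1 + v'²)^{3/2 - 1/(2α)}, v(0) = v'(0) = 0, has a global solution on all
of ℝ iff ∫₀^∞ (1+w²)^{1/(2α)-3/2} dw diverges, iff α ≤ 1/2. -/
theorem stmt_19 (α : ℝ) (hα : 0 < α) :
    ((∃ v w : ℝ → ℝ, v 0 = 0 ∧ w 0 = 0 ∧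
        (∀ x : ℝ, HasDerivAt v (w x) x) ∧
        (∀ x : ℝ, HasDerivAt w ((1 + (w x)^2) ^ ((3:ℝ)/2 - 1/(2*α))) x)) ↔
      ¬ IntegrableOn (fun w : ℝ => (1 + w^2) ^ (1/(2*α) - (3:ℝ)/2)) (Set.Ioi 0)) ∧
    (¬ IntegrableOn (fun w : ℝ => (1 + w^2) ^ (1/(2*α) - (3:ℝ)/2)) (Set.Ioi 0) ↔
      α ≤ 1/2) := by
  set p : ℝ := 1 / (2 * α) - 3 / 2 with hp
  have hrhs (y : ℝ) : (1 + y ^ 2) ^ ((3 : ℝ) / 2 - 1 / (2 * α)) = ((1 + y ^ 2) ^ p)⁻¹ := by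
    rw [← rpow_neg (by positivity), neg_sub]
  have hode := exists_hasDerivAt_inv_comp_iff (continuous_one_add_sq_rpow p)
    (fun t => by positivity) (fun t => by simp only [even_two, Even.neg_pow])
  simp only [← hrhs] at hode
  refine ⟨⟨fun ⟨_, w, _, hw0, _, hw⟩ => hode.1 ⟨w, hw0, hw⟩, fun h => ?_⟩, ?_⟩
  · obtain ⟨w, hw0, hw⟩ := hode.2 h
    have hwc : Continuous w := continuous_iff_continuousAt.2 fun x => (hw x).continuousAt
    exact ⟨fun x => ∫ t in (0 : ℝ)..x, w t, w, intervalIntegral.integral_same, hw0,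
      fun x => (hwc.integral_hasStrictDerivAt 0 x).hasDerivAt, hw⟩
  · rw [integrableOn_Ioi_one_add_sq_rpow_iff, not_lt, hp, le_sub_iff_add_le,
      le_div_iff₀ (by positivity)]
    constructor <;> intro <;> linarith
end
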